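/- The spectrum of op_N(a) defined above consists exactly of the N values (νℓ/N)² for ν ∈ ℤ with -N/2 ≤ ν < N/2; in particular inf σ(op_N(a)) = 0 and sup σ(op_N(a)) = ℓ²/4 if N is even and (ℓ²/4)((N-1)/N)² if N is odd. -/

import Mathlib

/-- The matrix of op_N(a) = ℓ²/12 · I + (ℓ²/(2π²)) ∑_{n≥1}((-1)ⁿ/n²)(T^{n,0}+T^{-n,0}),
using (T^{n,0})_{k,l} = δ_{k+n,l}. -/
noncomputable def opAMat (N : ℕ) [NeZero N] (ℓ : ℝ) : Matrix (ZMod N) (ZMod N) ℂ :=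
  fun k l => ((ℓ^2/12 : ℝ) : ℂ) * (if k = l then 1 else 0)
    + ((ℓ^2/(2*Real.pi^2) : ℝ) : ℂ) * ∑' n : ℕ,
        ((-1 : ℂ)^(n+1) / ((n : ℂ)+1)^2) *
          ((if k + ((n+1 : ℕ) : ZMod N) = l then 1 else 0)
            + (if k - ((n+1 : ℕ) : ZMod N) = l then 1 else 0))

/-!
`opAMat N ℓ` is a circulant matrix over `ZMod N`, so the additive characters
`ψ_ν(k) = exp (2πiνk/N)` form an eigenbasis, and the eigenvalue belonging to `ψ_ν` is
`ℓ²/12 + (ℓ²/π²) ∑_{n ≥ 1} (-1)ⁿ cos (nθ) / n²` with `θ = 2πν/N`. Every class in `ZMod N` has a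
representative `ν` with `-N ≤ 2ν < N`, which puts `θ` in `[-π, π]`; there the Fourier series
of the Bernoulli polynomial `B₂` gives `∑_{n ≥ 1} (-1)ⁿ cos (nθ) / n² = θ²/4 - π²/12`, so the
eigenvalue is `(νℓ/N)²`.
-/

open Complex Set Real

namespace Matrix

variable {G : Type*} [AddCommGroup G] [Fintype G]

theorem circulant_mulVec_addChar {R : Type*} [CommSemiring R] (v : G → R) (ψ : AddChar G R) :
    circulant v *ᵥ ⇑ψ = (∑ d, v d * ψ (-d)) • ⇑ψ := by
  ext k
  simp only [mulVec, dotProduct, circulant_apply, Pi.smul_apply, smul_eq_mul, Finset.sum_mul]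
  refine Fintype.sum_equiv (Equiv.subLeft k) _ _ fun l => ?_
  rw [Equiv.subLeft_apply, mul_assoc, ← AddChar.map_add_eq_mul, neg_sub, sub_add_cancel]

theorem spectrum_eq_range_of_mulVec_eq_smul {ι n K : Type*} [Field K] [Fintype n] [DecidableEq n]
    [Fintype ι] [DecidableEq ι] {A : Matrix n n K} (b : Module.Basis ι K (n → K)) {μ : ι → K}
    (h : ∀ i, A *ᵥ b i = μ i • b i) : spectrum K A = range μ := by
  have hdiag : LinearMap.toMatrix b b A.toLin' = diagonal μ := by
    ext i j
    rw [LinearMap.toMatrix_apply, toLin'_apply, h, map_smul, b.repr_self, diagonal_apply]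
    rcases eq_or_ne i j with rfl | hij <;> simp [*]
  rw [← spectrum_toLin', ← LinearMap.spectrum_toMatrix _ b, hdiag, spectrum_diagonal]

theorem spectrum_circulant [DecidableEq G] (v : G → ℂ) :
    spectrum ℂ (circulant v) = range fun ψ : AddChar G ℂ => ∑ d, v d * ψ (-d) :=
  spectrum_eq_range_of_mulVec_eq_smul (AddChar.complexBasis G) fun ψ => by
    rw [AddChar.complexBasis_apply, circulant_mulVec_addChar]

end Matrix

theorem ZMod.exists_intCast_eq_of_two_mul_mem_Ico {N : ℕ} [NeZero N] (x : ZMod N) :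
    ∃ ν : ℤ, -(N : ℤ) ≤ 2 * ν ∧ 2 * ν < N ∧ (ν : ZMod N) = x := by
  obtain ⟨hlo, hhi⟩ := x.valMinAbs_mem_Ioc
  rcases hhi.lt_or_eq with hlt | heq
  · exact ⟨x.valMinAbs, by omega, by omega, x.coe_valMinAbs⟩
  · -- `N = 2 * valMinAbs x`, so `-valMinAbs x` represents `x` as well
    refine ⟨-x.valMinAbs, by omega, by omega, ?_⟩
    rw [show -x.valMinAbs = x.valMinAbs - N by omega, Int.cast_sub, Int.cast_natCast,
      ZMod.natCast_self, sub_zero, x.coe_valMinAbs]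

theorem AddChar.zmodAddEquiv_intCast_apply_intCast {N : ℕ} [NeZero N] (μ k : ℤ) :
    AddChar.zmodAddEquiv (μ : ZMod N) (k : ZMod N) = cexp (2 * π * μ * k / N * I) := by
  rw [AddChar.zmodAddEquiv_apply]
  change ((AddChar.zmod N μ k : Circle) : ℂ) = _
  rw [AddChar.zmod_intCast, Circle.coe_exp]
  push_cast
  ring_nf

theorem hasSum_neg_one_pow_div_sq_mul_cexp_add {θ : ℝ} (hθ : θ ∈ Icc (-π) π) :
    HasSum (fun n : ℕ => (-1 : ℂ) ^ (n + 1) / ((n : ℂ) + 1) ^ 2 *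
        (cexp ((n + 1) * θ * I) + cexp (-((n + 1) * θ * I))))
      ((θ ^ 2 / 2 - π ^ 2 / 6 : ℝ) : ℂ) := by
  -- evaluate the Fourier series of the periodized Bernoulli polynomial `B₂` at `θ / 2π + 1/2`
  set x := θ / (2 * π) + 1 / 2 with hx_def
  have hx : x ∈ Icc (0 : ℝ) 1 := by
    obtain ⟨h1, h2⟩ := hθ
    constructor
    · rw [hx_def, div_add' _ _ _ (by positivity), le_div_iff₀ (by positivity)]; linarith
    · rw [hx_def, div_add' _ _ _ (by positivity), div_le_iff₀ (by positivity)]; linarith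
  have hfourier (m : ℤ) : fourier m (x : UnitAddCircle) = (-1) ^ m * cexp (m * θ * I) := by
    rw [fourier_coe_apply, ← exp_pi_mul_I, ← exp_int_mul, ← Complex.exp_add, hx_def]
    congr 1
    push_cast
    field_simp
    ring
  have hB := (hasSum_nat_add_iff' 1).mpr (hasSum_one_div_nat_pow_mul_fourier le_rfl hx)
  rw [Finset.sum_range_one] at hB
  have hval : -(2 * π * I) ^ 2 / (Nat.factorial 2 : ℂ) * (bernoulliFun 2 x : ℂ) -
      1 / ((0 : ℕ) : ℂ) ^ 2 * (fourier (0 : ℕ) (x : UnitAddCircle) +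
        (-1) ^ 2 * fourier (-((0 : ℕ) : ℤ)) (x : UnitAddCircle)) =
      ((θ ^ 2 / 2 - π ^ 2 / 6 : ℝ) : ℂ) := by
    rw [bernoulliFun_two, hx_def]
    push_cast
    field_simp
    rw [I_sq]
    ring
  rw [hval] at hB
  refine hB.congr_fun fun n => ?_
  rw [hfourier, hfourier, zpow_neg, zpow_natCast, ← inv_pow, inv_neg_one]
  push_cast
  rw [neg_mul, neg_mul]
  ring

theorem summable_neg_one_pow_div_sq_mul {b : ℕ → ℂ} {C : ℝ} (hb : ∀ n, ‖b n‖ ≤ C) :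
    Summable fun n : ℕ => (-1 : ℂ) ^ (n + 1) / ((n : ℂ) + 1) ^ 2 * b n := by
  have hsq : Summable fun n : ℕ => 1 / ((n + 1 : ℕ) : ℝ) ^ 2 :=
    (summable_nat_add_iff 1).2 (Real.summable_one_div_nat_pow.2 one_lt_two)
  refine .of_norm_bounded (hsq.mul_right C) fun n => ?_
  have h : ‖(-1 : ℂ) ^ (n + 1) / ((n : ℂ) + 1) ^ 2‖ = 1 / ((n + 1 : ℕ) : ℝ) ^ 2 := by
    rw [norm_div, norm_pow, norm_pow, norm_neg, norm_one, one_pow, ← Nat.cast_succ,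
      Complex.norm_natCast]
  rw [norm_mul, h]
  exact mul_le_mul_of_nonneg_left (hb n) (by positivity)

section OpA

variable (N : ℕ) [NeZero N] (ℓ : ℝ)

noncomputable def opASymbol (d : ZMod N) : ℂ :=
  ((ℓ ^ 2 / 12 : ℝ) : ℂ) * (if d = 0 then 1 else 0)
    + ((ℓ ^ 2 / (2 * π ^ 2) : ℝ) : ℂ) * ∑' n : ℕ, (-1 : ℂ) ^ (n + 1) / ((n : ℂ) + 1) ^ 2 *
        ((if d = -((n + 1 : ℕ) : ZMod N) then 1 else 0) +
          (if d = ((n + 1 : ℕ) : ZMod N) then 1 else 0))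

theorem opAMat_eq_circulant : opAMat N ℓ = Matrix.circulant (opASymbol N ℓ) := by
  ext k l
  have h₀ : k = l ↔ k - l = 0 := sub_eq_zero.symm
  have hadd (m : ZMod N) : k + m = l ↔ k - l = -m := by
    rw [sub_eq_iff_eq_add, ← sub_eq_iff_eq_add', sub_neg_eq_add, eq_comm]
  have hsub (m : ZMod N) : k - m = l ↔ k - l = m := by
    rw [sub_eq_iff_eq_add, sub_eq_iff_eq_add, add_comm, eq_comm]
  simp_rw [opAMat, Matrix.circulant_apply, opASymbol, h₀, hadd, hsub]

theorem sum_opASymbol_mul_addChar (ψ : AddChar (ZMod N) ℂ) :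
    ∑ d, opASymbol N ℓ d * ψ (-d) = ((ℓ ^ 2 / 12 : ℝ) : ℂ) + ((ℓ ^ 2 / (2 * π ^ 2) : ℝ) : ℂ) *
      ∑' n : ℕ, (-1 : ℂ) ^ (n + 1) / ((n : ℂ) + 1) ^ 2 *
        (ψ ((n + 1 : ℕ) : ZMod N) + ψ (-((n + 1 : ℕ) : ZMod N))) := by
  have hsummable (d : ZMod N) : Summable fun n : ℕ => (-1 : ℂ) ^ (n + 1) / ((n : ℂ) + 1) ^ 2 *
      ((if d = -((n + 1 : ℕ) : ZMod N) then 1 else 0) * ψ (-d) +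
        (if d = ((n + 1 : ℕ) : ZMod N) then 1 else 0) * ψ (-d)) := by
    refine summable_neg_one_pow_div_sq_mul (C := 1 + 1) fun n =>
      (norm_add_le _ _).trans (add_le_add (by split_ifs <;> simp) (by split_ifs <;> simp))
  simp only [opASymbol, add_mul, Finset.sum_add_distrib, mul_assoc, ← Finset.mul_sum,
    ← tsum_mul_right]
  rw [← Summable.tsum_finsetSum fun d _ => hsummable d]
  simp [ite_mul, Finset.sum_add_distrib, ← Finset.mul_sum]

theorem sum_opASymbol_mul_zmodAddEquiv (μ : ℤ) (h₁ : -(N : ℤ) ≤ 2 * μ) (h₂ : 2 * μ ≤ N) :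
    ∑ d, opASymbol N ℓ d * AddChar.zmodAddEquiv (μ : ZMod N) (-d) =
      (((μ : ℝ) * ℓ / N) ^ 2 : ℝ) := by
  have hN : (0 : ℝ) < N := by exact_mod_cast Nat.pos_of_neZero N
  set θ : ℝ := 2 * π * μ / N with hθ_def
  have hθ : θ ∈ Icc (-π) π := by
    have h₁' : -(N : ℝ) ≤ 2 * μ := by exact_mod_cast h₁
    have h₂' : 2 * (μ : ℝ) ≤ N := by exact_mod_cast h₂
    constructor
    · rw [le_div_iff₀ hN]; nlinarith [pi_pos]
    · rw [div_le_iff₀ hN]; nlinarith [pi_pos]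
  have hchar (n : ℕ) : AddChar.zmodAddEquiv (μ : ZMod N) ((n + 1 : ℕ) : ZMod N) +
      AddChar.zmodAddEquiv (μ : ZMod N) (-((n + 1 : ℕ) : ZMod N)) =
      cexp ((n + 1) * θ * I) + cexp (-((n + 1) * θ * I)) := by
    rw [← Int.cast_natCast, ← Int.cast_neg, AddChar.zmodAddEquiv_intCast_apply_intCast,
      AddChar.zmodAddEquiv_intCast_apply_intCast, hθ_def]
    push_cast
    ring_nf
  rw [sum_opASymbol_mul_addChar, tsum_congr fun n => by rw [hchar],
    (hasSum_neg_one_pow_div_sq_mul_cexp_add hθ).tsum_eq, hθ_def]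
  push_cast
  field_simp
  ring

theorem spectrum_opAMat : spectrum ℂ (opAMat N ℓ) = (fun x : ℝ => (x : ℂ)) ''
    {x | ∃ ν : ℤ, -(N : ℤ) ≤ 2 * ν ∧ 2 * ν < N ∧ x = ((ν : ℝ) * ℓ / N) ^ 2} := by
  rw [opAMat_eq_circulant, Matrix.spectrum_circulant,
    ← (AddChar.zmodAddEquiv (n := N)).surjective.range_comp]
  ext z
  constructor
  · rintro ⟨x, rfl⟩
    obtain ⟨ν, h₁, h₂, rfl⟩ := x.exists_intCast_eq_of_two_mul_mem_Ico
    exact ⟨_, ⟨ν, h₁, h₂, rfl⟩, (sum_opASymbol_mul_zmodAddEquiv N ℓ ν h₁ h₂.le).symm⟩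
  · rintro ⟨_, ⟨ν, h₁, h₂, rfl⟩, rfl⟩
    exact ⟨ν, sum_opASymbol_mul_zmodAddEquiv N ℓ ν h₁ h₂.le⟩

theorem isLeast_zero_sq_intCast_mul_div :
    IsLeast {x | ∃ ν : ℤ, -(N : ℤ) ≤ 2 * ν ∧ 2 * ν < N ∧ x = ((ν : ℝ) * ℓ / N) ^ 2} 0 := by
  have hN := Nat.pos_of_neZero N
  exact ⟨⟨0, by omega, by omega, by simp⟩, by rintro _ ⟨ν, -, -, rfl⟩; positivity⟩

theorem isGreatest_sq_intCast_mul_div :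
    IsGreatest {x | ∃ ν : ℤ, -(N : ℤ) ≤ 2 * ν ∧ 2 * ν < N ∧ x = ((ν : ℝ) * ℓ / N) ^ 2}
      ((((N / 2 : ℕ) : ℝ) * ℓ / N) ^ 2) := by
  have hN := Nat.pos_of_neZero N
  refine ⟨⟨-(N / 2 : ℕ), by omega, by omega, by rw [Int.cast_neg, Int.cast_natCast]; ring⟩, ?_⟩
  rintro _ ⟨ν, h₁, h₂, rfl⟩
  have hlo : -((N / 2 : ℕ) : ℝ) ≤ ν := by
    rw [← Int.cast_natCast, ← Int.cast_neg, Int.cast_le]; omega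
  have hhi : (ν : ℝ) ≤ (N / 2 : ℕ) := by
    rw [← Int.cast_natCast, Int.cast_le]; omega
  rw [mul_div_assoc, mul_div_assoc, mul_pow, mul_pow]
  exact mul_le_mul_of_nonneg_right (sq_le_sq' hlo hhi) (sq_nonneg _)

theorem sq_div_two_mul_div_eq_ite : (((N / 2 : ℕ) : ℝ) * ℓ / N) ^ 2 =
    if Even N then ℓ ^ 2 / 4 else ℓ ^ 2 / 4 * (((N : ℝ) - 1) / N) ^ 2 := by
  have hN : (N : ℝ) ≠ 0 := NeZero.ne _
  split_ifs with h
  · obtain ⟨t, rfl⟩ := h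
    have ht : (t : ℝ) ≠ 0 := by rintro h; simp [h] at hN
    rw [show (t + t) / 2 = t by omega]
    push_cast
    field_simp
    ring
  · obtain ⟨t, rfl⟩ := Nat.not_even_iff_odd.1 h
    rw [show (2 * t + 1) / 2 = t by omega]
    push_cast
    field_simp
    ring

end OpA

theorem spectrum_opA_general (N : ℕ) [NeZero N] (ℓ : ℝ)
    (S : Set ℝ)
    (hS : S = {x : ℝ | ∃ ν : ℤ, -(N : ℤ) ≤ 2*ν ∧ 2*ν < (N : ℤ) ∧ x = ((ν : ℝ) * ℓ / N)^2}) :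
    spectrum ℂ (opAMat N ℓ) = (fun x : ℝ => (x : ℂ)) '' S
    ∧ sInf S = 0
    ∧ sSup S = (if Even N then ℓ^2/4 else ℓ^2/4 * (((N : ℝ)-1)/N)^2) := by
  subst hS
  exact ⟨spectrum_opAMat N ℓ, (isLeast_zero_sq_intCast_mul_div N ℓ).csInf_eq,
    (isGreatest_sq_intCast_mul_div N ℓ).csSup_eq.trans (sq_div_two_mul_div_eq_ite N ℓ)⟩

/-- the spectrum of op_N(a) consists exactly of the values (νℓ/N)²,
ν ∈ ℤ, -N/2 ≤ ν < N/2; in particular its infimum is 0 and its supremum is ℓ²/4 for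
even N and (ℓ²/4)((N-1)/N)² for odd N. -/
theorem spectrum_opA (N : ℕ) [NeZero N] (ℓ : ℝ) (hℓ : 0 < ℓ)
    (S : Set ℝ)
    (hS : S = {x : ℝ | ∃ ν : ℤ, -(N : ℤ) ≤ 2*ν ∧ 2*ν < (N : ℤ) ∧ x = ((ν : ℝ) * ℓ / N)^2}) :
    spectrum ℂ (opAMat N ℓ) = (fun x : ℝ => (x : ℂ)) '' S
    ∧ sInf S = 0
    ∧ sSup S = (if Even N then ℓ^2/4 else ℓ^2/4 * (((N : ℝ)-1)/N)^2) :=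
  spectrum_opA_general N ℓ S hS
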